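/- arXiv:math/0401059 — 4 statements merged into one kernel-verified Lean document; each statement's English description precedes it below -/
import Mathlib

section
/- Let T be the Bass–Serre tree of an amalgamated free product Γ = H *_Z F, let ν_H be the vertex stabilized by H, let ε_i and ε_j be two distinct edges adjacent to ν_H, let h ∈ H with h·ε_i = ε_j, and let σ ∈ Γ \ H fix the endpoint of ε_j other than ν_H. Then γ = σh is a hyperbolic isometry of T whose axis passes through the endpoint of ε_i other than ν_H, through ν_H, and through the endpoint of ε_j other than ν_H. -/
open SimpleGraph

namespace BassSerreAux

variable {V : Type*} {T : SimpleGraph V}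

/-- The walk along a combinatorial line from `f a` to `f (a + k)`. -/
def lineWalk (T : SimpleGraph V) (f : ℤ → V) (h1 : ∀ n : ℤ, T.Adj (f n) (f (n + 1))) :
    (a : ℤ) → (k : ℕ) → T.Walk (f a) (f (a + k))
  | a, 0 => Walk.nil.copy rfl (by norm_num)
  | a, (k + 1) => (Walk.cons (h1 a) (lineWalk T f h1 (a + 1) k)).copy rfl
      (by congr 1; push_cast; ring)

lemma lineWalk_length (f : ℤ → V) (h1 : ∀ n : ℤ, T.Adj (f n) (f (n + 1))) :
    ∀ (a : ℤ) (k : ℕ), (lineWalk T f h1 a k).length = k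
  | a, 0 => by simp [lineWalk]
  | a, (k + 1) => by simp [lineWalk, lineWalk_length f h1 (a + 1) k]

lemma mem_lineWalk_support (f : ℤ → V) (h1 : ∀ n : ℤ, T.Adj (f n) (f (n + 1))) :
    ∀ (a : ℤ) (k : ℕ) (x : V),
      x ∈ (lineWalk T f h1 a k).support ↔ ∃ j : ℕ, j ≤ k ∧ x = f (a + j)
  | a, 0, x => by
    simp only [lineWalk, Walk.support_copy, Walk.support_nil, List.mem_singleton]
    constructor
    · rintro rfl; exact ⟨0, le_rfl, by norm_num⟩
    · rintro ⟨j, hj, rfl⟩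
      interval_cases j
      norm_num
  | a, (k + 1), x => by
    simp only [lineWalk, Walk.support_copy, Walk.support_cons, List.mem_cons,
      mem_lineWalk_support f h1 (a + 1) k]
    constructor
    · rintro (rfl | ⟨j, hj, rfl⟩)
      · exact ⟨0, by omega, by norm_num⟩
      · exact ⟨j + 1, by omega, by congr 1; push_cast; ring⟩
    · rintro ⟨j, hj, rfl⟩
      match j with
      | 0 => left; norm_num
      | (j + 1) =>
        right
        exact ⟨j, by omega, by congr 1; push_cast; ring⟩

lemma lineWalk_isPath (hac : T.IsAcyclic) (f : ℤ → V)
    (h1 : ∀ n : ℤ, T.Adj (f n) (f (n + 1))) (h2 : ∀ n : ℤ, f n ≠ f (n + 2)) :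
    ∀ (k : ℕ) (a : ℤ), (lineWalk T f h1 a k).IsPath := by
  intro k
  induction k using Nat.strong_induction_on with
  | _ k IH =>
    match k with
    | 0 =>
      intro a
      simp [lineWalk]
    | (k + 1) =>
      intro a
      simp only [lineWalk, Walk.isPath_copy, Walk.cons_isPath_iff]
      refine ⟨IH k (by omega) (a + 1), ?_⟩
      intro hmem
      rw [mem_lineWalk_support] at hmem
      obtain ⟨j, hj, hfa⟩ := hmem
      match j with
      | 0 =>
        exact (h1 a).ne (by simpa using hfa)
      | 1 =>
        exact h2 a (by rw [hfa]; congr 1; push_cast; ring)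
      | (j + 2) =>
        -- two distinct paths from `f (a+1)` to `f (a+1+(j+2))`
        have hp1 : (lineWalk T f h1 (a + 1) (j + 2)).IsPath := IH (j + 2) (by omega) (a + 1)
        let p2 : T.Walk (f (a + 1)) (f (a + 1 + ((j + 2 : ℕ) : ℤ))) :=
          (Walk.cons (h1 a).symm Walk.nil).copy rfl hfa
        have hp2 : p2.IsPath := by
          simp only [p2, Walk.isPath_copy]
          exact Walk.IsPath.nil.cons (by simpa using (h1 a).ne')
        have heq := hac.path_unique ⟨lineWalk T f h1 (a + 1) (j + 2), hp1⟩ ⟨p2, hp2⟩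
        have hlen := congrArg (fun q : T.Path _ _ => q.1.length) heq
        simp only [lineWalk_length, p2, Walk.length_copy, Walk.length_cons,
          Walk.length_nil] at hlen
        omega


lemma path_length_eq_dist (hc : T.Connected) (hac : T.IsAcyclic) {u v : V}
    (p : T.Walk u v) (hp : p.IsPath) : p.length = T.dist u v := by
  classical
  have h1 : T.dist u v ≤ p.length := SimpleGraph.dist_le p
  obtain ⟨q, hq⟩ := (hc u v).exists_walk_length_eq_dist
  have heq := hac.path_unique ⟨p, hp⟩ ⟨q.bypass, q.bypass_isPath⟩
  have hlen := congrArg (fun r : T.Path u v => r.1.length) heq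
  simp only at hlen
  have h3 := q.length_bypass_le
  omega

lemma line_dist (hT : T.IsTree) (f : ℤ → V)
    (h1 : ∀ n : ℤ, T.Adj (f n) (f (n + 1))) (h2 : ∀ n : ℤ, f n ≠ f (n + 2))
    (m n : ℤ) : T.dist (f m) (f n) = (m - n).natAbs := by
  have key : ∀ (a : ℤ) (k : ℕ), T.dist (f a) (f (a + k)) = k := by
    intro a k
    rw [← path_length_eq_dist hT.isConnected hT.IsAcyclic _
      (lineWalk_isPath hT.IsAcyclic f h1 h2 k a), lineWalk_length]
  rcases le_total n m with hle | hle
  · have hk : m = n + ((m - n).toNat : ℤ) := by omega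
    rw [SimpleGraph.dist_comm, hk, key]
    omega
  · have hk : n = m + ((n - m).toNat : ℤ) := by omega
    rw [hk, key]
    omega

lemma dist_smul_eq (hc : T.Connected) {Γ : Type*} [Group Γ] [MulAction Γ V]
    (hadj : ∀ (γ : Γ) (a b : V), T.Adj (γ • a) (γ • b) ↔ T.Adj a b)
    (g : Γ) (a b : V) : T.dist (g • a) (g • b) = T.dist a b := by
  have key : ∀ (g : Γ) (a b : V), T.dist (g • a) (g • b) ≤ T.dist a b := by
    intro g a b
    obtain ⟨q, hq⟩ := (hc a b).exists_walk_length_eq_dist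
    have := SimpleGraph.dist_le
      (q.map ⟨fun x => g • x, fun hab => (hadj g _ _).2 hab⟩)
    simpa [hq] using this
  refine le_antisymm (key g a b) ?_
  have := key g⁻¹ (g • a) (g • b)
  simpa using this

end BassSerreAux

/-- Bass–Serre tree situation for an amalgam `Γ = H *_Z F`: a group `Γ` acts on a simplicial
tree `T` preserving adjacency and preserving the natural two-colouring of the vertices (as the
Bass–Serre tree of an amalgam is bipartite, with `Γ` preserving the two sides).  Let `ν_H` be
the vertex whose stabilizer is `H`, let `ε_i = (ν_H, ν_i)` and `ε_j = (ν_H, ν_j)` be two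
distinct edges adjacent to `ν_H`, let `h ∈ H` with `h ε_i = ε_j`, and let `σ ∉ H` fix `ν_j`.
Then `γ = σ h` is a hyperbolic isometry of `T` (it fixes no vertex), and its axis — an
invariant geodesic line along which it translates — passes through `ν_i`, `ν_H` and `ν_j`
consecutively. -/
theorem bassSerre_sigma_h_hyperbolic {V : Type*} (T : SimpleGraph V) (hT : T.IsTree)
    (Γ : Type*) [Group Γ] [MulAction Γ V]
    (hadj : ∀ (γ : Γ) (a b : V), T.Adj (γ • a) (γ • b) ↔ T.Adj a b)
    (c : V → Bool) (hbip : ∀ a b : V, T.Adj a b → c a ≠ c b)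
    (hcol : ∀ (γ : Γ) (x : V), c (γ • x) = c x)
    (H : Subgroup Γ) (νH νi νj : V)
    (hstab : ∀ γ : Γ, γ • νH = νH ↔ γ ∈ H)
    (hadji : T.Adj νH νi) (hadjj : T.Adj νH νj) (hne : νi ≠ νj)
    (h : Γ) (hh : h ∈ H) (hhij : h • νi = νj)
    (σ : Γ) (hσ : σ ∉ H) (hσj : σ • νj = νj) :
    (∀ x : V, (σ * h) • x ≠ x) ∧
      ∃ line : ℤ → V,
        (∀ m n : ℤ, T.dist (line m) (line n) = (m - n).natAbs) ∧
        (∀ n : ℤ, (σ * h) • line n = line (n + 2)) ∧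
        ∃ n : ℤ, line (n - 1) = νi ∧ line n = νH ∧ line (n + 1) = νj := by
  set γ : Γ := σ * h with hγdef
  -- basic facts about γ
  have hγH : γ • νH = σ • νH := by
    rw [hγdef, mul_smul, (hstab h).2 hh]
  have hγi : γ • νi = νj := by
    rw [hγdef, mul_smul, hhij, hσj]
  have hγH_ne : γ • νH ≠ νH := by
    rw [hγH]
    intro e
    exact hσ ((hstab σ).1 e)
  have hγj_ne : γ • νj ≠ νj := by
    intro e
    rw [← hγi] at e
    have e2 := MulAction.injective γ e
    rw [hγi] at e2
    exact hne e2.symm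
  -- the line
  set f : ℤ → V := fun n => if Even n then γ ^ (n / 2) • νH else γ ^ ((n - 1) / 2) • νj
    with hfdef
  have hfe : ∀ k : ℤ, f (2 * k) = γ ^ k • νH := by
    intro k
    have h1 : Even (2 * k) := even_two_mul k
    simp only [hfdef, if_pos h1, Int.mul_ediv_cancel_left k (by norm_num : (2:ℤ) ≠ 0)]
  have hfo : ∀ k : ℤ, f (2 * k + 1) = γ ^ k • νj := by
    intro k
    have h1 : ¬ Even (2 * k + 1) := by simp [parity_simps]
    have h2 : (2 * k + 1 - 1) / 2 = k := by
      rw [show 2 * k + 1 - 1 = 2 * k by ring,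
        Int.mul_ediv_cancel_left k (by norm_num : (2:ℤ) ≠ 0)]
    simp only [hfdef, if_neg h1, h2]
  have hcomm : ∀ (k : ℤ) (x : V), γ • γ ^ k • x = γ ^ k • γ • x := by
    intro k x
    rw [smul_smul, smul_smul]
    congr 1
    rw [← zpow_one_add, ← zpow_add_one, add_comm]
  have hstep : ∀ n : ℤ, f (n + 2) = γ • f n := by
    intro n
    rcases Int.even_or_odd n with ⟨k, hk⟩ | ⟨k, hk⟩
    · rw [show n + 2 = 2 * (k + 1) by omega, show n = 2 * k by omega, hfe, hfe,
        zpow_add_one, mul_smul, hcomm]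
    · rw [show n + 2 = 2 * (k + 1) + 1 by omega, show n = 2 * k + 1 by omega, hfo, hfo,
        zpow_add_one, mul_smul, hcomm]
  have hadj1 : ∀ n : ℤ, T.Adj (f n) (f (n + 1)) := by
    intro n
    rcases Int.even_or_odd n with ⟨k, hk⟩ | ⟨k, hk⟩
    · rw [show n = 2 * k by omega, show 2 * k + 1 = 2 * k + 1 from rfl, hfe, hfo]
      exact (hadj (γ ^ k) _ _).2 hadjj
    · rw [show n = 2 * k + 1 by omega, show 2 * k + 1 + 1 = 2 * (k + 1) by ring, hfo, hfe,
        zpow_add_one, mul_smul]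
      refine (hadj (γ ^ k) _ _).2 ?_
      rw [hγH, ← hσj]
      exact (hadj σ _ _).2 hadjj.symm
  have hnb : ∀ n : ℤ, f n ≠ f (n + 2) := by
    intro n
    rw [hstep n]
    rcases Int.even_or_odd n with ⟨k, hk⟩ | ⟨k, hk⟩
    · rw [show n = 2 * k by omega, hfe, hcomm]
      intro e
      exact hγH_ne (MulAction.injective (γ ^ k) e).symm
    · rw [show n = 2 * k + 1 by omega, hfo, hcomm]
      intro e
      exact hγj_ne (MulAction.injective (γ ^ k) e).symm
  have hdist : ∀ m n : ℤ, T.dist (f m) (f n) = (m - n).natAbs :=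
    BassSerreAux.line_dist hT f hadj1 hnb
  constructor
  · -- hyperbolicity
    intro x hx
    have hfix : ∀ k : ℕ, T.dist x (f (2 * k)) = T.dist x (f 0) := by
      intro k
      induction k with
      | zero => norm_num
      | succ k IH =>
        have e1 := BassSerreAux.dist_smul_eq hT.isConnected hadj γ x (f (2 * (k : ℤ)))
        rw [hx] at e1
        push_cast
        rw [show (2 * ((k : ℤ) + 1)) = 2 * k + 2 by ring, hstep, e1]
        exact_mod_cast IH
    set d : ℕ := T.dist x (f 0) with hd
    have h1 := hfix (d + 1)
    push_cast at h1
    have h2 : T.dist (f 0) (f (2 * ((d : ℤ) + 1))) = 2 * (d + 1) := by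
      rw [hdist]
      omega
    have h3 := hT.isConnected.dist_triangle (u := f 0) (v := x) (w := f (2 * ((d : ℤ) + 1)))
    rw [h2, h1, SimpleGraph.dist_comm (u := f 0) (v := x)] at h3
    omega
  · refine ⟨f, hdist, fun n => (hstep n).symm, 0, ?_, ?_, ?_⟩
    · rw [show (0:ℤ) - 1 = 2 * (-1) + 1 by ring, hfo]
      rw [← hγi, zpow_neg_one, inv_smul_smul]
    · rw [show (0:ℤ) = 2 * 0 by ring, hfe]
      simp
    · rw [show (0:ℤ) + 1 = 2 * 0 + 1 by ring, hfo]
      simp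
end

section
/- Let X be a compact metric space and ~ an equivalence relation on X such that every equivalence class is closed and, for every ε > 0, only finitely many equivalence classes have diameter greater than ε. Then the quotient space X/~ is Hausdorff. -/
/-- If `X` is a compact metric space and `s` an equivalence relation on `X` whose classes are
closed and such that, for every `ε > 0`, only finitely many classes have diameter greater
than `ε`, then the quotient space `X / s` is Hausdorff. -/
theorem quotient_t2_of_closed_classes_small_diam
    (X : Type*) [MetricSpace X] [CompactSpace X] (s : Setoid X)
    (hclosed : ∀ x : X, IsClosed {y : X | s.r x y})
    (hfin : ∀ ε : ℝ, 0 < ε →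
      {c : Quotient s | ε < Metric.diam {x : X | Quotient.mk s x = c}}.Finite) :
    T2Space (Quotient s) := by
  -- classes are closed
  have hclass : ∀ c : Quotient s, IsClosed {x : X | Quotient.mk s x = c} := by
    intro c
    induction c using Quotient.inductionOn with
    | h x =>
      have : {y : X | Quotient.mk s y = Quotient.mk s x} = {y : X | s.r x y} := by
        ext y
        simp only [Set.mem_setOf_eq, Quotient.eq]
        exact ⟨fun h => s.symm h, fun h => s.symm h⟩
      rw [this]
      exact hclosed x
  -- the relation is closed in X × X
  have hR : IsClosed {p : X × X | s.r p.1 p.2} := by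
    have key : ∀ p : X × X, p ∈ closure {p : X × X | s.r p.1 p.2} → s.r p.1 p.2 := by
      intro ⟨x, y⟩ hp
      by_cases hxy : x = y
      · subst hxy; exact s.refl x
      have hd : 0 < dist x y := dist_pos.mpr hxy
      set ε := dist x y / 2 with hε
      have hε0 : 0 < ε := by positivity
      obtain hfinS := hfin ε hε0
      -- closed superset of R
      set K : Set (X × X) := {p : X × X | dist p.1 p.2 ≤ ε} with hK
      set F : Set (X × X) :=
        ⋃ c ∈ {c : Quotient s | ε < Metric.diam {x : X | Quotient.mk s x = c}},
          ({x : X | Quotient.mk s x = c} ×ˢ {x : X | Quotient.mk s x = c}) with hF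
      have hKclosed : IsClosed K :=
        isClosed_le (by fun_prop) continuous_const
      have hFclosed : IsClosed F := by
        refine Set.Finite.isClosed_biUnion hfinS fun c _ => ?_
        exact (hclass c).prod (hclass c)
      have hsub : {p : X × X | s.r p.1 p.2} ⊆ K ∪ F := by
        rintro ⟨a, b⟩ hab
        by_cases h : dist a b ≤ ε
        · exact Or.inl h
        · push_neg at h
          refine Or.inr ?_
          have hamem : a ∈ {x : X | Quotient.mk s x = Quotient.mk s a} := rfl
          have hbmem : b ∈ {x : X | Quotient.mk s x = Quotient.mk s a} :=
            (Quotient.eq (r := s)).mpr (s.symm hab)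
          have hbd : Bornology.IsBounded {x : X | Quotient.mk s x = Quotient.mk s a} :=
            ((hclass _).isCompact).isBounded
          have hdiam : ε < Metric.diam {x : X | Quotient.mk s x = Quotient.mk s a} :=
            lt_of_lt_of_le h (Metric.dist_le_diam_of_mem hbd hamem hbmem)
          exact Set.mem_biUnion hdiam ⟨hamem, hbmem⟩
      have hcl : closure {p : X × X | s.r p.1 p.2} ⊆ K ∪ F :=
        closure_minimal hsub (hKclosed.union hFclosed)
      rcases hcl hp with h | h
      · exact absurd h (by simp only [hK, Set.mem_setOf_eq, hε]; linarith)
      · simp only [hF, Set.mem_iUnion, Set.mem_prod] at h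
        obtain ⟨c, _, hx, hy⟩ := h
        exact (Quotient.eq (r := s)).mp (hx.trans hy.symm)
    exact isClosed_of_closure_subset key
  -- quotient map
  set q : X → Quotient s := Quotient.mk s with hq
  have hqcont : Continuous q := continuous_quotient_mk'
  have hqsurj : Function.Surjective q := Quotient.mk''_surjective
  -- saturation of closed is closed, hence q is a closed map
  have hqclosed : IsClosedMap q := by
    intro C hC
    rw [← isQuotientMap_quotient_mk'.isClosed_preimage]
    show IsClosed (q ⁻¹' (q '' C))
    have : q ⁻¹' (q '' C) = Prod.fst '' ({p : X × X | s.r p.1 p.2} ∩ Set.univ ×ˢ C) := by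
      ext a
      simp only [Set.mem_preimage, Set.mem_image, Set.mem_inter_iff, Set.mem_prod,
        Set.mem_univ, true_and, Set.mem_setOf_eq, Prod.exists]
      constructor
      · rintro ⟨b, hbC, hba⟩
        exact ⟨a, b, ⟨(Quotient.eq (r := s)).mp hba.symm, hbC⟩, rfl⟩
      · rintro ⟨a', b, ⟨hr, hbC⟩, rfl⟩
        exact ⟨b, hbC, ((Quotient.eq (r := s)).mpr hr).symm⟩
    rw [this]
    have hcpt : IsCompact ({p : X × X | s.r p.1 p.2} ∩ Set.univ ×ˢ C) :=
      (hR.inter (isClosed_univ.prod hC)).isCompact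
    exact (hcpt.image continuous_fst).isClosed
  -- now the T2 argument
  constructor
  intro a b hab
  obtain ⟨x, rfl⟩ := hqsurj a
  obtain ⟨y, rfl⟩ := hqsurj b
  have hnr : ¬ s.r x y := fun h => hab ((Quotient.eq (r := s)).mpr h)
  -- disjoint closed classes
  set Cx := {z : X | Quotient.mk s z = q x} with hCx
  set Cy := {z : X | Quotient.mk s z = q y} with hCy
  have hdisj : Disjoint Cx Cy := by
    rw [Set.disjoint_left]
    intro z hzx hzy
    exact hab (hzx ▸ hzy ▸ rfl)
  obtain ⟨U, V, hU, hV, hCxU, hCyV, hUV⟩ :=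
    normal_separation (hclass (q x)) (hclass (q y)) hdisj
  refine ⟨(q '' Uᶜ)ᶜ, (q '' Vᶜ)ᶜ, (hqclosed _ hU.isClosed_compl).isOpen_compl,
    (hqclosed _ hV.isClosed_compl).isOpen_compl, ?_, ?_, ?_⟩
  · rintro ⟨z, hz, hzq⟩
    exact hz (hCxU (hzq : Quotient.mk s z = q x))
  · rintro ⟨z, hz, hzq⟩
    exact hz (hCyV (hzq : Quotient.mk s z = q y))
  · rw [Set.disjoint_left]
    rintro c hcU hcV
    obtain ⟨z, rfl⟩ := hqsurj c
    have hzU : z ∈ U := by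
      by_contra h
      exact hcU ⟨z, h, rfl⟩
    have hzV : z ∈ V := by
      by_contra h
      exact hcV ⟨z, h, rfl⟩
    exact Set.disjoint_left.mp hUV hzU hzV
end

section
/- Let M be a compact, connected, locally connected metric space and ξ ∈ M a point that is not a local cut point, such that M \ {ξ} is connected. Then M \ {ξ} has exactly one end (it is connected at infinity). -/
/-- Let `M` be a compact, connected, locally connected metric space and `ξ ∈ M` a point that
is not a local cut point (it has a fundamental system of neighbourhoods with connected
punctures), with `M \ {ξ}` connected.  Then `M \ {ξ}` is connected at infinity (has exactly
one end): every compact subset `K` of `M \ {ξ}` is contained in a compact `K'` such that the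
complement of `K'` lies in a single unbounded (non relatively compact) connected component of
the complement of `K` in `M \ {ξ}`. -/
theorem punctured_space_one_end
    (M : Type*) [MetricSpace M] [CompactSpace M] [ConnectedSpace M]
    [LocallyConnectedSpace M] (ξ : M)
    (hnotcut : ∀ U ∈ nhds ξ, ∃ V ∈ nhds ξ, V ⊆ U ∧ IsConnected (V \ {ξ}))
    (hconn : IsConnected ({ξ}ᶜ : Set M)) :
    ∀ K : Set M, K ⊆ {ξ}ᶜ → IsCompact K →
      ∃ K' : Set M, IsCompact K' ∧ K ⊆ K' ∧ K' ⊆ {ξ}ᶜ ∧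
        (∀ x ∈ {ξ}ᶜ \ K', ∀ y ∈ {ξ}ᶜ \ K',
          y ∈ connectedComponentIn ({ξ}ᶜ \ K) x) ∧
        (∀ x ∈ {ξ}ᶜ \ K', ∀ C : Set M, IsCompact C → C ⊆ {ξ}ᶜ →
          ¬ connectedComponentIn ({ξ}ᶜ \ K) x ⊆ C) := by
  intro K hKsub hKcomp
  have hKc : Kᶜ ∈ nhds ξ := hKcomp.isClosed.isOpen_compl.mem_nhds (hKsub · rfl)
  obtain ⟨V, hVn, hVsub, hVconn⟩ := hnotcut Kᶜ hKc
  refine ⟨(interior V)ᶜ, (isOpen_interior.isClosed_compl).isCompact, ?_, ?_, ?_, ?_⟩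
  · intro x hx hx'
    exact hVsub (interior_subset hx') hx
  · intro x hx
    simp only [Set.mem_compl_iff, Set.mem_singleton_iff]
    rintro rfl
    exact hx (mem_interior_iff_mem_nhds.mpr hVn)
  · have hVK : V \ {ξ} ⊆ {ξ}ᶜ \ K := fun z hz => ⟨hz.2, hVsub hz.1⟩
    intro x hx y hy
    have hxV : x ∈ V \ {ξ} := ⟨interior_subset (by simpa using hx.2), hx.1⟩
    have hyV : y ∈ V \ {ξ} := ⟨interior_subset (by simpa using hy.2), hy.1⟩
    exact hVconn.isPreconnected.subset_connectedComponentIn hxV hVK hyV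
  · intro x hx C hCcomp hCsub hsubC
    have hVK : V \ {ξ} ⊆ {ξ}ᶜ \ K := fun z hz => ⟨hz.2, hVsub hz.1⟩
    have hxV : x ∈ V \ {ξ} := ⟨interior_subset (by simpa using hx.2), hx.1⟩
    have hsub := hVconn.isPreconnected.subset_connectedComponentIn hxV hVK
    -- find a point of V \ {ξ} outside C
    have hCc : Cᶜ ∩ V ∈ nhds ξ :=
      Filter.inter_mem (hCcomp.isClosed.isOpen_compl.mem_nhds (hCsub · rfl)) hVn
    obtain ⟨W, hWn, hWsub, hWconn⟩ := hnotcut _ hCc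
    obtain ⟨z, hzW, hzne⟩ := hWconn.nonempty
    have hzV : z ∈ V \ {ξ} := ⟨(hWsub hzW).2, hzne⟩
    exact (hWsub hzW).1 (hsubC (hsub hzV))
end

section
/- Let Γ act on a compact metric space Σ as an expansive group of homeomorphisms (there is ε > 0 such that any two distinct points can be moved at distance ≥ ε apart by some γ ∈ Γ). Suppose C is a Γ-invariant family of pairwise disjoint closed subsets of Σ, each containing at least two points, such that for every δ > 0 only finitely many members of C have diameter > δ. Then C has only finitely many Γ-orbits. -/
/-- Let `Γ` act by homeomorphisms on a compact metric space `Σ`, expansively: some `ε > 0`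
separates every pair of distinct points after translation by a suitable group element.  If
`𝒞` is a `Γ`-invariant family of pairwise disjoint closed subsets, each with at least two
points, such that for every `δ > 0` only finitely many members have diameter `> δ`, then `𝒞`
has only finitely many `Γ`-orbits. -/
theorem finitely_many_orbits_of_expansive
    (Γ : Type*) [Group Γ] (S : Type*) [MetricSpace S] [CompactSpace S] [MulAction Γ S]
    (hcont : ∀ γ : Γ, Continuous (fun x : S => γ • x))
    (hexp : ∃ ε : ℝ, 0 < ε ∧ ∀ x x' : S, x ≠ x' → ∃ γ : Γ, ε ≤ dist (γ • x) (γ • x'))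
    (𝒞 : Set (Set S))
    (hclosed : ∀ C ∈ 𝒞, IsClosed C)
    (hdisj : ∀ C ∈ 𝒞, ∀ D ∈ 𝒞, C ≠ D → Disjoint C D)
    (htwo : ∀ C ∈ 𝒞, ∃ x ∈ C, ∃ y ∈ C, x ≠ y)
    (hinv : ∀ (γ : Γ), ∀ C ∈ 𝒞, (fun x : S => γ • x) '' C ∈ 𝒞)
    (hfin : ∀ δ : ℝ, 0 < δ → {C ∈ 𝒞 | δ < Metric.diam C}.Finite) :
    ∃ F : Set (Set S), F.Finite ∧ F ⊆ 𝒞 ∧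
      ∀ C ∈ 𝒞, ∃ D ∈ F, ∃ γ : Γ, (fun x : S => γ • x) '' D = C := by
  obtain ⟨ε, hε, hsep⟩ := hexp
  refine ⟨{C ∈ 𝒞 | ε / 2 < Metric.diam C}, hfin _ (by linarith), fun C hC => hC.1, ?_⟩
  intro C hC
  obtain ⟨x, hx, y, hy, hxy⟩ := htwo C hC
  obtain ⟨γ, hγ⟩ := hsep x y hxy
  have hD : (fun x : S => γ • x) '' C ∈ 𝒞 := hinv γ C hC
  have hbd : Bornology.IsBounded ((fun x : S => γ • x) '' C) :=
    (isCompact_univ.isBounded).subset (Set.subset_univ _)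
  have hdiam : ε / 2 < Metric.diam ((fun x : S => γ • x) '' C) := by
    have := Metric.dist_le_diam_of_mem hbd (Set.mem_image_of_mem _ hx)
      (Set.mem_image_of_mem _ hy)
    linarith
  refine ⟨_, ⟨hD, hdiam⟩, γ⁻¹, ?_⟩
  ext z
  simp only [Set.image_image, inv_smul_smul, Set.image_id']
end
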